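/- Let V be a real vector space, Y ⊆ X ⊆ V, and 𝔸 a nonzero additive subgroup of (ℝ,+). If Y is a weak 𝔸-face of X, then Y is ({2},{1,2})-closed in X; concretely: whenever y₁, y₂ ∈ Y and x₁, x₂ ∈ X (repetitions allowed) satisfy y₁ + y₂ = x₁ + x₂, one has x₁ ∈ Y and x₂ ∈ Y. -/
import Mathlib


open Finsupp

/-- `R₊ := R ∩ [0,∞)`. -/
def Rplus (R : Set ℝ) : Set ℝ := R ∩ Set.Ici 0

/-- `ℓ(f) := Σ_v f(v)`. -/
noncomputable def ell {V : Type*} [AddCommGroup V] [Module ℝ V] (f : V →₀ ℝ) : ℝ :=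
  f.sum fun _ r => r

/-- `ℓ⃗(f) := Σ_v f(v) • v`. -/
noncomputable def vell {V : Type*} [AddCommGroup V] [Module ℝ V] (f : V →₀ ℝ) : V :=
  f.sum fun v r => r • v

/-- `f ∈ Fin(X,R)`: finitely supported, support in `X`, values in `R ∪ {0}`. -/
def IsFinSupp {V : Type*} [AddCommGroup V] [Module ℝ V] (X : Set V) (R : Set ℝ)
    (f : V →₀ ℝ) : Prop :=
  ↑f.support ⊆ X ∧ ∀ v, f v ∈ R ∪ {0}

/-- `Y` is a weak `R`-face of `X`. -/
def IsWeakFace {V : Type*} [AddCommGroup V] [Module ℝ V] (X Y : Set V) (R : Set ℝ) : Prop :=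
  ∀ f g : V →₀ ℝ, IsFinSupp X (Rplus R) f → IsFinSupp Y (Rplus R) g →
    ell f = ell g → 0 < ell g → vell f = vell g → ↑f.support ⊆ Y

/-- `Y` is a positive weak `R`-face of `X`. -/
def IsPosWeakFace {V : Type*} [AddCommGroup V] [Module ℝ V] (X Y : Set V) (R : Set ℝ) : Prop :=
  ∀ f g : V →₀ ℝ, IsFinSupp X (Rplus R) f → IsFinSupp Y (Rplus R) g →
    vell f = vell g → ell g ≤ ell f ∧ (ell g = ell f ↔ ↑f.support ⊆ Y)

/-- `Y` is `(R',R)`-closed in `X`. -/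
def IsRClosed {V : Type*} [AddCommGroup V] [Module ℝ V] (X Y : Set V) (R' R : Set ℝ) : Prop :=
  ∀ f g : V →₀ ℝ, IsFinSupp X R f → IsFinSupp Y R g →
    ell f = ell g → ell f ∈ R' → ell f ≠ 0 → vell f = vell g → ↑f.support ⊆ Y

/-- The maximizer set `X(φ)`. -/
def maximizer {V : Type*} [AddCommGroup V] [Module ℝ V] (X : Set V) (φ : V →ₗ[ℝ] ℝ) : Set V :=
  {x | x ∈ X ∧ ∀ x' ∈ X, φ x' ≤ φ x}


lemma ell_add {V : Type*} [AddCommGroup V] [Module ℝ V] (f g : V →₀ ℝ) :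
    ell (f + g) = ell f + ell g := by
  simp [ell, Finsupp.sum_add_index']

lemma vell_add {V : Type*} [AddCommGroup V] [Module ℝ V] (f g : V →₀ ℝ) :
    vell (f + g) = vell f + vell g := by
  rw [vell, vell, vell]
  exact Finsupp.sum_add_index' (fun u => zero_smul ℝ u) (fun u r s => add_smul r s u)

lemma ell_single {V : Type*} [AddCommGroup V] [Module ℝ V] (v : V) (a : ℝ) :
    ell (Finsupp.single v a) = a := by
  simp [ell, Finsupp.sum_single_index]

lemma vell_single {V : Type*} [AddCommGroup V] [Module ℝ V] (v : V) (a : ℝ) :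
    vell (Finsupp.single v a) = a • v := by
  rw [vell]
  exact Finsupp.sum_single_index (zero_smul ℝ v)

lemma pairFinSupp {V : Type*} [AddCommGroup V] [Module ℝ V] (X : Set V)
    (𝔸 : AddSubgroup ℝ) {a : ℝ} (ha : a ∈ 𝔸) (ha0 : 0 < a)
    {v w : V} (hv : v ∈ X) (hw : w ∈ X) :
    IsFinSupp X (Rplus (𝔸 : Set ℝ)) (Finsupp.single v a + Finsupp.single w a) := by
  classical
  constructor
  · intro u hu
    have := Finsupp.support_add (g₁ := Finsupp.single v a) (g₂ := Finsupp.single w a)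
      (Finset.mem_coe.mp hu)
    rcases Finset.mem_union.mp this with h | h
    · have := Finsupp.support_single_subset h
      simp only [Finset.mem_singleton] at this; exact this ▸ hv
    · have := Finsupp.support_single_subset h
      simp only [Finset.mem_singleton] at this; exact this ▸ hw
  · intro u
    simp only [Finsupp.add_apply, Finsupp.single_apply]
    by_cases h1 : v = u <;> by_cases h2 : w = u <;>
        simp only [h1, h2, if_pos, if_neg, if_true, if_false, add_zero, zero_add,
          Set.mem_union, Set.mem_singleton_iff, Rplus, Set.mem_inter_iff, Set.mem_Ici]
    · exact Or.inl ⟨𝔸.add_mem ha ha, by linarith⟩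
    · exact Or.inl ⟨ha, ha0.le⟩
    · exact Or.inl ⟨ha, ha0.le⟩
    · exact Or.inr trivial

/-- If `Y` is a weak `𝔸`-face of `X`, then `Y` is `({2},{1,2})`-closed in
`X`: whenever `y₁, y₂ ∈ Y`, `x₁, x₂ ∈ X` and `y₁ + y₂ = x₁ + x₂`, one has `x₁, x₂ ∈ Y`. -/
theorem statement11 {V : Type*} [AddCommGroup V] [Module ℝ V]
    (X Y : Set V) (hYX : Y ⊆ X) (𝔸 : AddSubgroup ℝ) (h𝔸 : 𝔸 ≠ ⊥)
    (hface : IsWeakFace X Y (𝔸 : Set ℝ)) :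
    ∀ y₁ ∈ Y, ∀ y₂ ∈ Y, ∀ x₁ ∈ X, ∀ x₂ ∈ X,
      y₁ + y₂ = x₁ + x₂ → x₁ ∈ Y ∧ x₂ ∈ Y := by
  classical
  intro y₁ hy₁ y₂ hy₂ x₁ hx₁ x₂ hx₂ hsum
  obtain ⟨b, hb, hb0⟩ : ∃ b ∈ 𝔸, b ≠ 0 := by
    by_contra h
    push_neg at h
    exact h𝔸 (AddSubgroup.ext fun x =>
      ⟨fun hx => AddSubgroup.mem_bot.mpr (h x hx),
       fun hx => AddSubgroup.mem_bot.mp hx ▸ 𝔸.zero_mem⟩)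
  set a : ℝ := |b| with ha_def
  have ha : a ∈ 𝔸 := by
    rcases abs_cases b with ⟨h, _⟩ | ⟨h, _⟩
    · rw [ha_def, h]; exact hb
    · rw [ha_def, h]; exact 𝔸.neg_mem hb
  have ha0 : 0 < a := abs_pos.mpr hb0
  set f : V →₀ ℝ := Finsupp.single x₁ a + Finsupp.single x₂ a with hf
  set g : V →₀ ℝ := Finsupp.single y₁ a + Finsupp.single y₂ a with hg
  have hellf : ell f = a + a := by rw [hf, ell_add, ell_single, ell_single]
  have hellg : ell g = a + a := by rw [hg, ell_add, ell_single, ell_single]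
  have hvf : vell f = a • x₁ + a • x₂ := by rw [hf, vell_add, vell_single, vell_single]
  have hvg : vell g = a • y₁ + a • y₂ := by rw [hg, vell_add, vell_single, vell_single]
  have hkey : ↑f.support ⊆ Y := by
    apply hface f g (pairFinSupp X 𝔸 ha ha0 hx₁ hx₂)
      (pairFinSupp Y 𝔸 ha ha0 hy₁ hy₂)
    · rw [hellf, hellg]
    · rw [hellg]; linarith
    · rw [hvf, hvg, ← smul_add, ← smul_add, hsum]
  constructor
  · apply hkey
    simp only [hf, Finset.mem_coe, Finsupp.mem_support_iff, Finsupp.add_apply,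
      Finsupp.single_apply]
    rcases eq_or_ne x₂ x₁ with h | h <;> simp [h] <;> linarith
  · apply hkey
    simp only [hf, Finset.mem_coe, Finsupp.mem_support_iff, Finsupp.add_apply,
      Finsupp.single_apply]
    rcases eq_or_ne x₁ x₂ with h | h <;> simp [h] <;> linarith
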